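/- arXiv:1806.10500 — 2 statements merged into one kernel-verified Lean document; each statement's English description precedes it below -/
import Mathlib

section
/- For all positive integers n, m with n + m > 6 and n, m ≥ 1, every graph obtained from K_n + K_m by adding one edge between the two components has product irregularity strength 3. -/
open Finset

open scoped Classical in
/-- The product degree of vertex `v`: the product of the labels of the edges incident with `v`. -/
noncomputable def pdeg {V : Type*} [Fintype V] (G : SimpleGraph V) (w : Sym2 V → ℕ) (v : V) : ℕ :=
  ∏ u ∈ Finset.univ.filter (fun u => G.Adj v u), w s(v, u)

/-- A labelling is product-irregular if distinct vertices have distinct product degrees. -/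
def ProductIrregular {V : Type*} [Fintype V] (G : SimpleGraph V) (w : Sym2 V → ℕ) : Prop :=
  Function.Injective (pdeg G w)

/-- The product irregularity strength: the least `s` admitting a product-irregular labelling
with labels in `{1,…,s}`. -/
noncomputable def ps {V : Type*} [Fintype V] (G : SimpleGraph V) : ℕ :=
  sInf {s : ℕ | ∃ w : Sym2 V → ℕ,
    (∀ u v : V, G.Adj u v → w s(u, v) ∈ Finset.Icc 1 s) ∧ ProductIrregular G w}
/-- The disjoint union `K_n + K_m` of two complete graphs. -/
def cliquePair (n m : ℕ) : SimpleGraph (Fin n ⊕ Fin m) where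
  Adj a b := a ≠ b ∧ a.isLeft = b.isLeft
  symm := ⟨fun a b h => ⟨h.1.symm, h.2.symm⟩⟩
  loopless := ⟨fun a h => h.1 rfl⟩

/-- Adding a single edge joining `u` and `v`. -/
def addEdge {V : Type*} (G : SimpleGraph V) (u v : V) : SimpleGraph V :=
  G ⊔ SimpleGraph.fromEdgeSet {s(u, v)}

/-! With labels in `{1, 2}` the product degree of `v` is `2 ^ d v`, where `d` is the degree in the
subgraph of edges labelled `2`; since no graph on at least two vertices has pairwise distinct
degrees, `ps G ≥ 3` for every such `G`.

For the upper bound, swapping the cliques and permuting each of them are isomorphisms, so we may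
assume `n ≤ m` (hence `4 ≤ m`) and that the bridge joins the vertices `(n - 1) / 2` and
`(m - 1) / 2`. Label an edge `ij` of `K_n` by `2` if `i + j ≥ n` and by `1` otherwise, an edge `ij`
of `K_m` by `3` if `i + j ≥ m` and by `2` otherwise, and the bridge by `3`. In the threshold graph
`i + j ≥ k` on `{0, …, k - 1}` the vertex `i` has degree `i - [2i ≥ k]`, so each of the degrees
`0, …, k - 2` occurs once, except `(k - 1) / 2`, which occurs at `(k - 1) / 2` and at
`(k - 1) / 2 + 1`; the bridge's factor `3` separates these two. The product degrees are `2 ^ t`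
(`t ≤ n - 2`) and `2 ^ ((n - 1) / 2) * 3` on `K_n`, and `2 ^ (m - 1 - t) * 3 ^ t` and
`2 ^ (m - 1 - (m - 1) / 2) * 3 ^ ((m - 1) / 2 + 1)` on `K_m`; comparing the exponents of `2` and
`3`, they are pairwise distinct once `n ≤ m` and `4 ≤ m`. -/

open Function Sum SimpleGraph

def HasIrregularLabelling {V : Type*} [Fintype V] (G : SimpleGraph V) (s : ℕ) : Prop :=
  ∃ w : Sym2 V → ℕ, (∀ u v, G.Adj u v → w s(u, v) ∈ Icc 1 s) ∧ ProductIrregular G w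

section Labelling

variable {V W : Type*} [Fintype V] [Fintype W] {G : SimpleGraph V} {H : SimpleGraph W}

open Classical in
lemma pdeg_eq_prod_ite (w : Sym2 V → ℕ) (v : V) :
    pdeg G w v = ∏ u, if G.Adj v u then w s(v, u) else 1 :=
  prod_filter _ _

lemma HasIrregularLabelling.mono {s t : ℕ} (h : HasIrregularLabelling G s) (hst : s ≤ t) :
    HasIrregularLabelling G t := by
  obtain ⟨w, hw, hirr⟩ := h
  exact ⟨w, fun u v huv => Icc_subset_Icc_right hst (hw u v huv), hirr⟩

lemma pdeg_comp_sym2Map (e : G ≃g H) (w : Sym2 W → ℕ) (v : V) :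
    pdeg G (w ∘ Sym2.map e) v = pdeg H w (e v) := by
  classical
  rw [pdeg_eq_prod_ite, pdeg_eq_prod_ite]
  exact Fintype.prod_equiv e.toEquiv _ _ fun u => by simp [e.map_adj_iff]

lemma HasIrregularLabelling.of_iso {s : ℕ} (e : G ≃g H) (h : HasIrregularLabelling H s) :
    HasIrregularLabelling G s := by
  obtain ⟨w, hw, hirr⟩ := h
  refine ⟨w ∘ Sym2.map e, fun u v huv => hw _ _ (e.map_adj_iff.mpr huv), fun x y hxy => ?_⟩
  simp only [pdeg_comp_sym2Map] at hxy
  exact e.injective (hirr hxy)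

end Labelling

theorem SimpleGraph.exists_ne_degree_eq {V : Type*} [Fintype V] [Nontrivial V]
    (H : SimpleGraph V) [DecidableRel H.Adj] : ∃ x y, x ≠ y ∧ H.degree x = H.degree y := by
  by_contra! hinj
  let deg : V → Fin (Fintype.card V) := fun v => ⟨H.degree v, H.degree_lt_card_verts v⟩
  have hdeg : Bijective deg := (Fintype.bijective_iff_injective_and_card deg).mpr
    ⟨fun x y hxy => by_contra fun hne => hinj x y hne (Fin.val_eq_of_eq hxy), by simp⟩
  have hcard := Fintype.one_lt_card (α := V)
  obtain ⟨x, hx⟩ := hdeg.2 ⟨Fintype.card V - 1, by omega⟩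
  obtain ⟨y, hy⟩ := hdeg.2 ⟨0, by omega⟩
  have hxy : x ≠ y := by
    rintro rfl
    have := congrArg Fin.val (hx.symm.trans hy)
    simp only at this
    omega
  have hux : H.IsUniversal x := (H.degree_eq_card_sub_one x).mp (congrArg Fin.val hx)
  have hy0 : H.degree y = 0 := congrArg Fin.val hy
  exact absurd ((H.degree_pos_iff_exists_adj y).mpr ⟨x, (hux hxy).symm⟩) (by omega)

def labelSubgraph {V : Type*} (G : SimpleGraph V) (w : Sym2 V → ℕ) (c : ℕ) : SimpleGraph V where
  Adj u v := G.Adj u v ∧ w s(u, v) = c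
  symm := ⟨fun _ _ h => ⟨h.1.symm, Sym2.eq_swap ▸ h.2⟩⟩
  loopless := ⟨fun _ h => G.irrefl h.1⟩

section LowerBound

variable {V : Type*} [Fintype V] {G : SimpleGraph V}

open Classical in
lemma pdeg_eq_two_pow_degree {w : Sym2 V → ℕ} (hw : ∀ u v, G.Adj u v → w s(u, v) ∈ Icc 1 2)
    (v : V) : pdeg G w v = 2 ^ (labelSubgraph G w 2).degree v := by
  have hterm : ∀ u, (if G.Adj v u then w s(v, u) else 1) =
      2 ^ (if (labelSubgraph G w 2).Adj v u then 1 else 0) := by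
    intro u
    by_cases h : G.Adj v u
    · have := mem_Icc.mp (hw v u h)
      by_cases h2 : w s(v, u) = 2
      · simp [labelSubgraph, h, h2]
      · simp only [labelSubgraph, h, h2, true_and, if_true, if_false, pow_zero]
        omega
    · simp [labelSubgraph, h]
  rw [pdeg_eq_prod_ite, prod_congr rfl fun u _ => hterm u, prod_pow_eq_pow_sum, sum_boole,
    ← card_neighborFinset_eq_degree, neighborFinset_eq_filter]
  rfl

lemma not_hasIrregularLabelling_two [Nontrivial V] : ¬ HasIrregularLabelling G 2 := by
  rintro ⟨w, hw, hirr⟩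
  classical
  obtain ⟨x, y, hxy, hdeg⟩ := (labelSubgraph G w 2).exists_ne_degree_eq
  exact hxy (hirr (by rw [pdeg_eq_two_pow_degree hw, pdeg_eq_two_pow_degree hw, hdeg]))

lemma ps_eq_three [Nontrivial V] (h : HasIrregularLabelling G 3) : ps G = 3 :=
  le_antisymm (Nat.sInf_le h) <| le_csInf ⟨3, h⟩ fun _ hs =>
    by_contra fun hlt => not_hasIrregularLabelling_two (HasIrregularLabelling.mono hs (by omega))

end LowerBound

section AddEdge

variable {V W : Type*} {G : SimpleGraph V} {H : SimpleGraph W}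

lemma addEdge_comm (u v : V) : addEdge G u v = addEdge G v u :=
  congrArg (G ⊔ ·) (edge_comm u v)

def SimpleGraph.Iso.addEdge (e : G ≃g H) {u v : V} {u' v' : W} (hu : e u = u') (hv : e v = v') :
    addEdge G u v ≃g addEdge H u' v' where
  toEquiv := e.toEquiv
  map_rel_iff' {x y} := by
    subst hu hv
    change H.Adj (e x) (e y) ∨ (edge (e u) (e v)).Adj (e x) (e y) ↔ G.Adj x y ∨ (edge u v).Adj x y
    simp only [adj_edge, e.map_adj_iff, e.injective.ne_iff, ← Sym2.map_mk,
      (Sym2.map.injective e.injective).eq_iff]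

lemma pdeg_addEdge [Fintype V] [DecidableEq V] {u v : V} (huv : u ≠ v) (hG : ¬ G.Adj u v)
    (w : Sym2 V → ℕ) (x : V) :
    pdeg (addEdge G u v) w x = pdeg G w x * if x = u ∨ x = v then w s(u, v) else 1 := by
  classical
  have hedge : ∀ y, (edge u v).Adj x y ↔ x = u ∧ y = v ∨ x = v ∧ y = u := fun y =>
    (edge_adj u v x y).trans <| and_iff_left_of_imp <| by
      rintro (⟨rfl, rfl⟩ | ⟨rfl, rfl⟩) <;> simpa [eq_comm] using huv
  have hsplit : ∀ y, (if (addEdge G u v).Adj x y then w s(x, y) else 1) =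
      (if G.Adj x y then w s(x, y) else 1) * if (edge u v).Adj x y then w s(x, y) else 1 := by
    intro y
    have hadj : (addEdge G u v).Adj x y ↔ G.Adj x y ∨ (edge u v).Adj x y := Iff.rfl
    by_cases h1 : G.Adj x y
    · have h2 : ¬ (edge u v).Adj x y := fun h2 => hG <| by
        rw [← G.mem_edgeSet, ((adj_edge _ _).mp h2).1]
        exact h1
      rw [if_pos (hadj.mpr (Or.inl h1)), if_pos h1, if_neg h2, mul_one]
    · rw [if_neg h1, one_mul]
      exact if_congr (hadj.trans (or_iff_right h1)) rfl rfl
  rw [pdeg_eq_prod_ite, pdeg_eq_prod_ite, prod_congr rfl fun y _ => hsplit y, prod_mul_distrib]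
  congr 1
  simp only [hedge]
  by_cases hxu : x = u
  · subst hxu
    simp [huv]
  by_cases hxv : x = v
  · subst hxv
    simp [hxu, Sym2.eq_swap]
  · simp [hxu, hxv]

end AddEdge

section Threshold

def thresholdDegree (k i : ℕ) : ℕ := if k ≤ 2 * i then i - 1 else i

lemma card_filter_le_add_eq_thresholdDegree {k : ℕ} (i : Fin k) :
    ((univ.erase i).filter fun j : Fin k => k ≤ (i : ℕ) + j).card = thresholdDegree k i := by
  have hall : #{j : Fin k | k ≤ (i : ℕ) + j} = i := by
    have hlt := Fin.card_filter_val_lt (n := k) (m := k - i)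
    have hsum := card_filter_add_card_filter_not (s := (univ : Finset (Fin k)))
      (fun j : Fin k => (j : ℕ) < k - i)
    simp only [card_univ, Fintype.card_fin, not_lt] at hsum
    have : #{j : Fin k | k - i ≤ (j : ℕ)} = #{j : Fin k | k ≤ (i : ℕ) + j} := by
      congr 1; ext j; simp only [mem_filter, mem_univ, true_and]; omega
    omega
  rw [filter_erase, thresholdDegree]
  split_ifs with h
  · rw [card_erase_of_mem (by simp only [mem_filter, mem_univ, true_and]; omega), hall]
  · rw [erase_eq_of_notMem (by simp only [mem_filter, mem_univ, true_and]; omega), hall]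

lemma prod_erase_ite_le_add {k : ℕ} (i : Fin k) (c d : ℕ) :
    ∏ j ∈ univ.erase i, (if k ≤ (i : ℕ) + j then c else d) =
      c ^ thresholdDegree k i * d ^ (k - 1 - thresholdDegree k i) := by
  have hsum := card_filter_add_card_filter_not (s := univ.erase i)
    (fun j : Fin k => k ≤ (i : ℕ) + j)
  rw [card_erase_of_mem (mem_univ i), card_univ, Fintype.card_fin,
    card_filter_le_add_eq_thresholdDegree] at hsum
  rw [prod_ite, prod_const, prod_const, card_filter_le_add_eq_thresholdDegree]
  congr 2
  omega

lemma injective_two_pow_mul_three_pow : Injective fun p : ℕ × ℕ => 2 ^ p.1 * 3 ^ p.2 := by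
  intro p q h
  have hfac (r : ℕ × ℕ) :
      (2 ^ r.1 * 3 ^ r.2).factorization = Finsupp.single 2 r.1 + Finsupp.single 3 r.2 := by
    simp [Nat.factorization_mul, Nat.prime_two.factorization, Nat.prime_three.factorization]
  have hpq := congrArg Nat.factorization h
  simp only [hfac] at hpq
  exact Prod.ext (by simpa using congrArg (· 2) hpq) (by simpa using congrArg (· 3) hpq)

end Threshold

section CliquePair

variable {n m : ℕ}

def cliquePairSumCongr (σ : Equiv.Perm (Fin n)) (τ : Equiv.Perm (Fin m)) :
    cliquePair n m ≃g cliquePair n m where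
  toEquiv := Equiv.sumCongr σ τ
  map_rel_iff' {x y} := by rcases x with i | i <;> rcases y with j | j <;> simp [cliquePair]

def cliquePairComm (n m : ℕ) : cliquePair n m ≃g cliquePair m n where
  toEquiv := Equiv.sumComm _ _
  map_rel_iff' {x y} := by rcases x with i | i <;> rcases y with j | j <;> simp [cliquePair]

lemma not_cliquePair_adj_inl_inr (i : Fin n) (j : Fin m) :
    ¬ (cliquePair n m).Adj (inl i) (inr j) :=
  fun h => by simp [cliquePair] at h

lemma pdeg_cliquePair_inl (w : Sym2 (Fin n ⊕ Fin m) → ℕ) (i : Fin n) :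
    pdeg (cliquePair n m) w (inl i) = ∏ j ∈ univ.erase i, w s(inl i, inl j) := by
  classical
  rw [pdeg_eq_prod_ite, Fintype.prod_sum_type, ← filter_ne' univ i, prod_filter]
  simp [cliquePair, eq_comm]

lemma pdeg_cliquePair_inr (w : Sym2 (Fin n ⊕ Fin m) → ℕ) (j : Fin m) :
    pdeg (cliquePair n m) w (inr j) = ∏ k ∈ univ.erase j, w s(inr j, inr k) := by
  classical
  rw [pdeg_eq_prod_ite, Fintype.prod_sum_type, ← filter_ne' univ j, prod_filter]
  simp [cliquePair, eq_comm]

def thresholdLabelling (n m : ℕ) : Sym2 (Fin n ⊕ Fin m) → ℕ :=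
  Sym2.lift ⟨fun x y => match x, y with
    | inl i, inl j => if n ≤ (i : ℕ) + j then 2 else 1
    | inr i, inr j => if m ≤ (i : ℕ) + j then 3 else 2
    | _, _ => 3, by rintro (i | i) (j | j) <;> simp only [add_comm]⟩

lemma thresholdLabelling_mem_Icc (x y : Fin n ⊕ Fin m) :
    thresholdLabelling n m s(x, y) ∈ Icc 1 3 := by
  rcases x with i | i <;> rcases y with j | j <;> simp only [thresholdLabelling, Sym2.lift_mk] <;>
    (try split_ifs) <;> simp

def pdegExponents (a : Fin n) (b : Fin m) : Fin n ⊕ Fin m → ℕ × ℕ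
  | inl i => (thresholdDegree n i, if i = a then 1 else 0)
  | inr j => (m - 1 - thresholdDegree m j, thresholdDegree m j + if j = b then 1 else 0)

lemma pdeg_thresholdLabelling (a : Fin n) (b : Fin m) (x : Fin n ⊕ Fin m) :
    pdeg (addEdge (cliquePair n m) (inl a) (inr b)) (thresholdLabelling n m) x =
      2 ^ (pdegExponents a b x).1 * 3 ^ (pdegExponents a b x).2 := by
  rw [pdeg_addEdge inl_ne_inr (not_cliquePair_adj_inl_inr a b)]
  rcases x with i | j
  · rw [pdeg_cliquePair_inl]
    simp [thresholdLabelling, pdegExponents, prod_erase_ite_le_add]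
  · rw [pdeg_cliquePair_inr]
    simp only [thresholdLabelling, Sym2.lift_mk, prod_erase_ite_le_add, reduceCtorEq, inr.injEq,
      false_or, mul_ite, mul_one, pdegExponents]
    split_ifs <;> ring

lemma pdegExponents_injective (hnm : n ≤ m) (hm : 4 ≤ m) {a : Fin n} {b : Fin m}
    (ha : (a : ℕ) = (n - 1) / 2) (hb : (b : ℕ) = (m - 1) / 2) :
    Injective (pdegExponents a b) := by
  rintro (i | i) (j | j) h <;> obtain ⟨h1, h2⟩ := Prod.ext_iff.mp h <;>
    have := i.isLt <;> have := j.isLt <;>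
    simp only [pdegExponents, thresholdDegree, Fin.ext_iff, ha, hb, inl.injEq, inr.injEq,
      reduceCtorEq] at h1 h2 ⊢ <;>
    split_ifs at h1 h2 <;> omega

lemma hasIrregularLabelling_addEdge_cliquePair (hnm : n ≤ m) (hm : 4 ≤ m) (a : Fin n)
    (b : Fin m) : HasIrregularLabelling (addEdge (cliquePair n m) (inl a) (inr b)) 3 := by
  have hn := a.pos
  let a₀ : Fin n := ⟨(n - 1) / 2, by omega⟩
  let b₀ : Fin m := ⟨(m - 1) / 2, by omega⟩
  have hirr : HasIrregularLabelling (addEdge (cliquePair n m) (inl a₀) (inr b₀)) 3 := by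
    refine ⟨thresholdLabelling n m, fun x y _ => thresholdLabelling_mem_Icc x y, fun x y h => ?_⟩
    simp only [pdeg_thresholdLabelling] at h
    exact pdegExponents_injective hnm hm rfl rfl (injective_two_pow_mul_three_pow h)
  exact hirr.of_iso ((cliquePairSumCongr (Equiv.swap a a₀) (Equiv.swap b b₀)).addEdge
    (by simp [cliquePairSumCongr]) (by simp [cliquePairSumCongr]))

end CliquePair

theorem stmt_11_general (n m : ℕ) (hnm : 6 < n + m)
    (a : Fin n) (b : Fin m) :
    ps (addEdge (cliquePair n m) (Sum.inl a) (Sum.inr b)) = 3 := by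
  have : Nontrivial (Fin n ⊕ Fin m) := ⟨inl a, inr b, inl_ne_inr⟩
  refine ps_eq_three ?_
  rcases le_total n m with h | h
  · exact hasIrregularLabelling_addEdge_cliquePair h (by omega) a b
  · have := hasIrregularLabelling_addEdge_cliquePair h (by omega) b a
    rw [addEdge_comm] at this
    exact this.of_iso ((cliquePairComm n m).addEdge rfl rfl)

/-- For all `n, m ≥ 1` with `n + m > 6`, every graph obtained from `K_n + K_m` by adding
one edge between the two components has product irregularity strength `3`. -/
theorem stmt_11 (n m : ℕ) (hn : 1 ≤ n) (hm : 1 ≤ m) (hnm : 6 < n + m)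
    (a : Fin n) (b : Fin m) :
    ps (addEdge (cliquePair n m) (Sum.inl a) (Sum.inr b)) = 3 :=
  stmt_11_general n m hnm a b
end

section
/- Set A_n = M_n(1,2,3) and C_m = M_m(3,1,2). For every n ≥ 7 and m ≥ 4, the direct sum A_n ⊕ C_m is product-irregular. -/
/-- The matrix `M_n(x,y,z)` (1-based indices translated to `Fin n`): zero diagonal,
`x` when `j ≤ n - i + 1` (and `i ≠ j`), `z` at positions `(k,n)` and `(n,k)` where
`k = ⌈n/2⌉ + 1`, and `y` otherwise. -/
def Mmat (n x y z : ℕ) : Matrix (Fin n) (Fin n) ℕ := fun i j =>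
  if i = j then 0
  else if (j : ℕ) + 1 ≤ n - (i : ℕ) then x
  else if (((i : ℕ) + 1 = (n + 1) / 2 + 1 ∧ (j : ℕ) + 1 = n) ∨
           ((i : ℕ) + 1 = n ∧ (j : ℕ) + 1 = (n + 1) / 2 + 1)) then z
  else y

/-- Product of the nonzero entries of row `i`. -/
def rowProd {ι : Type*} [Fintype ι] [DecidableEq ι] (M : Matrix ι ι ℕ) (i : ι) : ℕ :=
  ∏ j ∈ Finset.univ.filter (fun j => M i j ≠ 0), M i j

/-- A square matrix is product-irregular if distinct rows have distinct products of
nonzero entries. -/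
def MatPI {ι : Type*} [Fintype ι] [DecidableEq ι] (M : Matrix ι ι ℕ) : Prop :=
  Function.Injective (rowProd M)

/-!
Every entry of `A_n` and `C_m` is `1`, `2` or `3`, so a row product is `2 ^ a * 3 ^ b`, and by
unique factorization the row is determined by the pair `(a, b)` of its numbers of entries `2` and
`3`. In row `r` (counted from `0`) of `M_n(x,y,z)` the entries `x` sit in the columns `j < n - r`
other than `r`, there is a single `z` exactly in rows `⌈n/2⌉` and `n - 1`, and all other
off-diagonal entries are `y`. These counts separate the rows within each block. Across the blocks,
a row of `C_m` with at most one `3` is its last row, which has one `2`, whereas for `n ≥ 7` the rows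
of `A_n` containing a `3` contain at least two `2`s.
-/

open Finset

theorem Nat.Prime.pow_mul_pow_eq_pow_mul_pow_iff {p q a b c d : ℕ} (hp : p.Prime) (hq : q.Prime)
    (hpq : p ≠ q) : p ^ a * q ^ b = p ^ c * q ^ d ↔ a = c ∧ b = d := by
  refine ⟨fun h => ?_, by rintro ⟨rfl, rfl⟩; rfl⟩
  have hfac := congrArg Nat.factorization h
  simp only [Nat.factorization_mul (pow_ne_zero _ hp.ne_zero) (pow_ne_zero _ hq.ne_zero),
    hp.factorization_pow, hq.factorization_pow] at hfac
  have hp' := congrArg (· p) hfac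
  have hq' := congrArg (· q) hfac
  simp [hpq, hpq.symm] at hp' hq'
  exact ⟨hp', hq'⟩

section fromBlocks

variable {ι κ : Type*} [Fintype ι] [Fintype κ] [DecidableEq ι] [DecidableEq κ]
  {A : Matrix ι ι ℕ} {C : Matrix κ κ ℕ}

theorem rowProd_fromBlocks_inl (i : ι) :
    rowProd (Matrix.fromBlocks A 0 0 C) (Sum.inl i) = rowProd A i := by
  simp only [rowProd, prod_filter, Fintype.prod_sum_type, Matrix.fromBlocks_apply₁₁,
    Matrix.fromBlocks_apply₁₂, Matrix.zero_apply, ne_eq, not_true_eq_false, if_false,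
    prod_const_one, mul_one]
  congr!

theorem rowProd_fromBlocks_inr (i : κ) :
    rowProd (Matrix.fromBlocks A 0 0 C) (Sum.inr i) = rowProd C i := by
  simp only [rowProd, prod_filter, Fintype.prod_sum_type, Matrix.fromBlocks_apply₂₁,
    Matrix.fromBlocks_apply₂₂, Matrix.zero_apply, ne_eq, not_true_eq_false, if_false,
    prod_const_one, one_mul]
  congr!

theorem matPI_fromBlocks (hA : MatPI A) (hC : MatPI C)
    (hAC : ∀ i j, rowProd A i ≠ rowProd C j) : MatPI (Matrix.fromBlocks A 0 0 C) := by
  rintro (i | i) (j | j) h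
  all_goals simp only [rowProd_fromBlocks_inl, rowProd_fromBlocks_inr] at h
  · exact congrArg Sum.inl (hA h)
  · exact absurd h (hAC i j)
  · exact absurd h.symm (hAC j i)
  · exact congrArg Sum.inr (hC h)

end fromBlocks

theorem Finset.prod_ite_ite_eq_pow {α M : Type*} [CommMonoid M] (s : Finset α)
    (p q : α → Prop) [DecidablePred p] [DecidablePred q] (a b c : M) :
    ∏ j ∈ s, (if p j then a else if q j then b else c) =
      a ^ #{j ∈ s | p j} * b ^ #{j ∈ s | ¬p j ∧ q j} *
        c ^ (#s - #{j ∈ s | p j} - #{j ∈ s | ¬p j ∧ q j}) := by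
  have hp : #{j ∈ s | p j} + #{j ∈ s | ¬p j} = #s := card_filter_add_card_filter_not p
  have hq : #{j ∈ s | ¬p j ∧ q j} + #{j ∈ s | ¬p j ∧ ¬q j} = #{j ∈ s | ¬p j} := by
    simpa only [filter_filter] using card_filter_add_card_filter_not (s := {j ∈ s | ¬p j}) q
  rw [prod_ite, prod_ite, prod_const, prod_const, prod_const, filter_filter, filter_filter,
    mul_assoc]
  congr 3
  omega

namespace Mmat

def numX (n r : ℕ) : ℕ := if 2 * r < n then n - r - 1 else n - r

def numZ (n r : ℕ) : ℕ := if r = (n + 1) / 2 ∨ r = n - 1 then 1 else 0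

def numY (n r : ℕ) : ℕ := n - 1 - numX n r - numZ n r

theorem rowProd_eq {n x y z : ℕ} (hn : 4 ≤ n) (hx : x ≠ 0) (hy : y ≠ 0) (hz : z ≠ 0)
    (i : Fin n) :
    rowProd (Mmat n x y z) i =
      x ^ numX n i * y ^ numY n i * z ^ numZ n i := by
  obtain ⟨r, hr⟩ := i
  set k := (n + 1) / 2
  set e : ℕ → ℕ := fun j => if j + 1 ≤ n - r then x else
    if (r = k ∧ j = n - 1) ∨ (r = n - 1 ∧ j = k) then z else y
  have hrange : rowProd (Mmat n x y z) ⟨r, hr⟩ = ∏ j ∈ (range n).erase r, e j := by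
    rw [prod_congr rfl fun j hj => (if_neg (ne_of_mem_erase hj) :
      (if j = r then 1 else e j) = e j).symm,
      prod_erase (f := fun j => if j = r then 1 else e j) _ (if_pos rfl),
      ← Fin.prod_univ_eq_prod_range, rowProd, prod_filter]
    refine prod_congr rfl fun j _ => ?_
    simp only [Mmat, e, Fin.ext_iff]
    split_ifs <;> first | rfl | omega
  have hX : #{j ∈ (range n).erase r | j + 1 ≤ n - r} = numX n r := by
    have : {j ∈ (range n).erase r | j + 1 ≤ n - r} = (range (n - r)).erase r := by
      ext j; simp only [mem_filter, mem_range, mem_erase]; omega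
    simp only [this, card_erase_eq_ite, card_range, mem_range, numX]
    split_ifs <;> omega
  have hZ : #{j ∈ (range n).erase r | ¬j + 1 ≤ n - r ∧
      ((r = k ∧ j = n - 1) ∨ (r = n - 1 ∧ j = k))} = numZ n r := by
    unfold numZ
    split_ifs with h
    · rw [card_eq_one]
      rcases h with h | h
      exacts [⟨n - 1, by ext j; simp only [mem_filter, mem_erase, mem_range, mem_singleton]; omega⟩,
        ⟨k, by ext j; simp only [mem_filter, mem_erase, mem_range, mem_singleton]; omega⟩]
    · rw [card_eq_zero, filter_eq_empty_iff]
      intro j _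
      omega
  rw [hrange, prod_ite_ite_eq_pow, hX, hZ, card_erase_of_mem (mem_range.2 hr), card_range,
    mul_right_comm, numY]

theorem eq_of_numX_eq_of_numZ_eq {n r s : ℕ} (hr : r < n) (hs : s < n)
    (hX : numX n r = numX n s) (hZ : numZ n r = numZ n s) : r = s := by
  unfold numX numZ at *
  split_ifs at hX hZ <;> omega

theorem eq_of_numY_eq_of_numZ_eq {n r s : ℕ} (hr : r < n) (hs : s < n)
    (hY : numY n r = numY n s) (hZ : numZ n r = numZ n s) : r = s := by
  unfold numY numX numZ at *
  split_ifs at hY hZ <;> omega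

theorem numZ_ne_numX_of_numY_eq_numZ {n m r s : ℕ} (hn : 7 ≤ n) (hm : 4 ≤ m) (hr : r < n)
    (hs : s < m) (h : numY n r = numZ m s) : numZ n r ≠ numX m s := by
  unfold numY numX numZ at *
  split_ifs at h ⊢ <;> omega

end Mmat

theorem rowProd_Mmat_one_two_three {n : ℕ} (hn : 4 ≤ n) (i : Fin n) :
    rowProd (Mmat n 1 2 3) i = 2 ^ Mmat.numY n i * 3 ^ Mmat.numZ n i := by
  rw [Mmat.rowProd_eq hn one_ne_zero two_ne_zero three_ne_zero, one_pow, one_mul]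

theorem rowProd_Mmat_three_one_two {n : ℕ} (hn : 4 ≤ n) (i : Fin n) :
    rowProd (Mmat n 3 1 2) i = 2 ^ Mmat.numZ n i * 3 ^ Mmat.numX n i := by
  rw [Mmat.rowProd_eq hn three_ne_zero one_ne_zero two_ne_zero, one_pow, mul_one, mul_comm]

theorem matPI_Mmat_one_two_three {n : ℕ} (hn : 4 ≤ n) : MatPI (Mmat n 1 2 3) := by
  intro i j h
  rw [rowProd_Mmat_one_two_three hn, rowProd_Mmat_one_two_three hn,
    Nat.prime_two.pow_mul_pow_eq_pow_mul_pow_iff Nat.prime_three (by norm_num)] at h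
  exact Fin.ext (Mmat.eq_of_numY_eq_of_numZ_eq i.isLt j.isLt h.1 h.2)

theorem matPI_Mmat_three_one_two {n : ℕ} (hn : 4 ≤ n) : MatPI (Mmat n 3 1 2) := by
  intro i j h
  rw [rowProd_Mmat_three_one_two hn, rowProd_Mmat_three_one_two hn,
    Nat.prime_two.pow_mul_pow_eq_pow_mul_pow_iff Nat.prime_three (by norm_num)] at h
  exact Fin.ext (Mmat.eq_of_numX_eq_of_numZ_eq i.isLt j.isLt h.2 h.1)

theorem rowProd_Mmat_one_two_three_ne_three_one_two {n m : ℕ} (hn : 7 ≤ n) (hm : 4 ≤ m)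
    (i : Fin n) (j : Fin m) : rowProd (Mmat n 1 2 3) i ≠ rowProd (Mmat m 3 1 2) j := by
  rw [rowProd_Mmat_one_two_three (by omega), rowProd_Mmat_three_one_two hm, ne_eq,
    Nat.prime_two.pow_mul_pow_eq_pow_mul_pow_iff Nat.prime_three (by norm_num)]
  exact fun h => Mmat.numZ_ne_numX_of_numY_eq_numZ hn hm i.isLt j.isLt h.1 h.2

/-- For every `n ≥ 7` and `m ≥ 4`, the direct sum `A_n ⊕ C_m` is product-irregular,
where `A_n = M_n(1,2,3)` and `C_m = M_m(3,1,2)`. -/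
theorem stmt_14 (n m : ℕ) (hn : 7 ≤ n) (hm : 4 ≤ m) :
    MatPI (Matrix.fromBlocks (Mmat n 1 2 3) 0 0 (Mmat m 3 1 2)) :=
  matPI_fromBlocks (matPI_Mmat_one_two_three (by omega)) (matPI_Mmat_three_one_two hm)
    (rowProd_Mmat_one_two_three_ne_three_one_two hn hm)
end
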